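/- Let x, y, x', y' ∈ ℝ≥0 satisfy max(x, y) ≤ max(x', y') and x + y ≤ x' + y'. Let m : Fin n → ℝ≥0 be a multiset of values containing x and y, and let m' be the multiset obtained from m by replacing x, y with x', y'. Then for every k ∈ {1,...,n}, the sum of the k largest elements of m is at most the sum of the k largest elements of m'. -/

import Mathlib

/-!
Any `k`-subset `S` of the old values can be matched by a `k`-subset `T` of the new values with at
least the same sum. Off `{i, j}` nothing changes; if `S` contains both `i` and `j` take `T = S` and
use `x + y ≤ x' + y'`; if it contains exactly one of them, its value is at most `max x' y'`, so
exchange it for whichever of `i, j` carries the maximum.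
-/

/-- The `k`-centrum value of `f`: the largest possible sum of `f` over a subset of size `k`
(i.e. the sum of the `k` largest values of `f`). -/
noncomputable def kSum (n k : ℕ) (f : Fin n → ℝ) : ℝ :=
  sSup {x : ℝ | ∃ S : Finset (Fin n), S.card = k ∧ x = ∑ i ∈ S, f i}

section Exchange

open Finset

variable {α : Type*} {f g : α → ℝ} {i j : α}

lemma sum_eq_sum_of_notMem_of_notMem (hrest : ∀ l, l ≠ i → l ≠ j → g l = f l)
    {S : Finset α} (hi : i ∉ S) (hj : j ∉ S) : ∑ l ∈ S, f l = ∑ l ∈ S, g l :=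
  sum_congr rfl fun l hl =>
    (hrest l (ne_of_mem_of_not_mem hl hi) (ne_of_mem_of_not_mem hl hj)).symm

lemma sum_le_sum_of_mem_of_mem [DecidableEq α] (hij : i ≠ j)
    (hrest : ∀ l, l ≠ i → l ≠ j → g l = f l) (hsum : f i + f j ≤ g i + g j)
    {S : Finset α} (hi : i ∈ S) (hj : j ∈ S) :
    ∑ l ∈ S, f l ≤ ∑ l ∈ S, g l := by
  have hj' : j ∈ S.erase i := mem_erase.2 ⟨hij.symm, hj⟩
  have hrest_sum : ∑ l ∈ (S.erase i).erase j, f l = ∑ l ∈ (S.erase i).erase j, g l :=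
    sum_eq_sum_of_notMem_of_notMem hrest
      (fun h => (mem_erase.1 (mem_of_mem_erase h)).1 rfl) (notMem_erase j _)
  rw [← add_sum_erase S f hi, ← add_sum_erase _ f hj', ← add_sum_erase S g hi,
    ← add_sum_erase _ g hj', hrest_sum]
  linarith

lemma exists_card_eq_sum_le_of_mem_of_notMem [DecidableEq α]
    (hrest : ∀ l, l ≠ i → l ≠ j → g l = f l)
    (hle : f i ≤ max (g i) (g j)) {S : Finset α} (hi : i ∈ S) (hj : j ∉ S) :
    ∃ T : Finset α, T.card = S.card ∧ ∑ l ∈ S, f l ≤ ∑ l ∈ T, g l := by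
  have hjR : j ∉ S.erase i := fun h => hj (mem_of_mem_erase h)
  have hrest_sum : ∑ l ∈ S.erase i, f l = ∑ l ∈ S.erase i, g l :=
    sum_eq_sum_of_notMem_of_notMem hrest (notMem_erase i S) hjR
  rcases le_max_iff.1 hle with hgi | hgj
  · refine ⟨S, rfl, ?_⟩
    rw [← add_sum_erase S f hi, ← add_sum_erase S g hi, hrest_sum]
    linarith
  · refine ⟨insert j (S.erase i), ?_, ?_⟩
    · rw [card_insert_of_notMem hjR, card_erase_add_one hi]
    · rw [← add_sum_erase S f hi, sum_insert hjR, hrest_sum]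
      linarith

lemma exists_card_eq_sum_le [DecidableEq α] (hij : i ≠ j)
    (hrest : ∀ l, l ≠ i → l ≠ j → g l = f l)
    (hmax : max (f i) (f j) ≤ max (g i) (g j)) (hsum : f i + f j ≤ g i + g j)
    (S : Finset α) : ∃ T : Finset α, T.card = S.card ∧ ∑ l ∈ S, f l ≤ ∑ l ∈ T, g l := by
  by_cases hi : i ∈ S <;> by_cases hj : j ∈ S
  · exact ⟨S, rfl, sum_le_sum_of_mem_of_mem hij hrest hsum hi hj⟩
  · exact exists_card_eq_sum_le_of_mem_of_notMem hrest ((le_max_left _ _).trans hmax) hi hj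
  · refine exists_card_eq_sum_le_of_mem_of_notMem (fun l hl hl' => hrest l hl' hl) ?_ hj hi
    rw [max_comm]
    exact (le_max_right _ _).trans hmax
  · exact ⟨S, rfl, (sum_eq_sum_of_notMem_of_notMem hrest hi hj).le⟩

end Exchange

lemma bddAbove_kSum_set (n k : ℕ) (f : Fin n → ℝ) :
    BddAbove {x : ℝ | ∃ S : Finset (Fin n), S.card = k ∧ x = ∑ i ∈ S, f i} := by
  refine (Set.finite_range fun S : Finset (Fin n) => ∑ i ∈ S, f i).bddAbove.mono ?_
  rintro x ⟨S, -, rfl⟩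
  exact ⟨S, rfl⟩

lemma kSum_le_kSum_of_forall_exists {n k : ℕ} (hkn : k ≤ n) {f g : Fin n → ℝ}
    (h : ∀ S : Finset (Fin n), ∃ T : Finset (Fin n), T.card = S.card ∧
      ∑ l ∈ S, f l ≤ ∑ l ∈ T, g l) :
    kSum n k f ≤ kSum n k g := by
  obtain ⟨S₀, -, hS₀⟩ :=
    Finset.exists_subset_card_eq (s := (Finset.univ : Finset (Fin n))) (n := k)
      (by rwa [Finset.card_univ, Fintype.card_fin])
  refine csSup_le ⟨_, S₀, hS₀, rfl⟩ ?_
  rintro _ ⟨S, hS, rfl⟩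
  obtain ⟨T, hT, hle⟩ := h S
  exact hle.trans (le_csSup (bddAbove_kSum_set n k g) ⟨T, hT.trans hS, rfl⟩)

theorem stmt_10_general (n : ℕ) (m m' : Fin n → ℝ) (i j : Fin n) (hij : i ≠ j)
    (x y x' y' : ℝ)
    (hmi : m i = x) (hmj : m j = y) (hmi' : m' i = x') (hmj' : m' j = y')
    (hrest : ∀ l, l ≠ i → l ≠ j → m' l = m l)
    (hmax : max x y ≤ max x' y') (hsum : x + y ≤ x' + y')
    (k : ℕ) (hkn : k ≤ n) :
    kSum n k m ≤ kSum n k m' := by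
  subst hmi hmj hmi' hmj'
  exact kSum_le_kSum_of_forall_exists hkn (exists_card_eq_sum_le hij hrest hmax hsum)

/-- Replacing two values `x, y` of a multiset by `x', y'` with larger sum and larger max
weakly increases the sum of the `k` largest elements, for every `k`. -/
theorem stmt_10 (n : ℕ) (m m' : Fin n → ℝ) (i j : Fin n) (hij : i ≠ j)
    (x y x' y' : ℝ)
    (hm : ∀ l, 0 ≤ m l) (hm' : ∀ l, 0 ≤ m' l)
    (hmi : m i = x) (hmj : m j = y) (hmi' : m' i = x') (hmj' : m' j = y')
    (hrest : ∀ l, l ≠ i → l ≠ j → m' l = m l)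
    (hmax : max x y ≤ max x' y') (hsum : x + y ≤ x' + y')
    (k : ℕ) (hk1 : 1 ≤ k) (hkn : k ≤ n) :
    kSum n k m ≤ kSum n k m' :=
  stmt_10_general n m m' i j hij x y x' y' hmi hmj hmi' hmj' hrest hmax hsum k hkn
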